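/- Let K be a field and 𝒢 a finite-dimensional Lie algebra over K with basis y₁,…,yₙ and structure constants a_{ij}^{(k)} ∈ K defined by [x_j, x_i] = a_{ij}^{(1)} x₁ + ⋯ + a_{ij}^{(n)} xₙ for i < j (identifying the variable xₗ with the basis element yₗ). Take the reduction data over the ring K given by σᵢ := id_K, δᵢ := 0, c_{ij} := 1, d_{ij} := 0, and the a_{ij}^{(k)} above, with associated functions p and h. Then conditions (2) and (3) of the existence theorem hold: h(x_j xᵢ r) = h(p(x_j xᵢ) r) for all i < j and r ∈ K, and h(x_k x_j xᵢ) = h(p(x_k x_j) xᵢ) for all i < j < k (the latter being a consequence of the Jacobi identity). -/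

import Mathlib

/-! ## The reduction machinery -/

/-- A letter is either a variable `xᵢ` (`Sum.inl i`) or an element of `R` (`Sum.inr r`). -/
abbrev Ltr (R : Type) (n : ℕ) := Sum (Fin n) R

/-- `W` is the free monoid on the alphabet `X ∪ R`. -/
abbrev W (R : Type) (n : ℕ) := FreeMonoid (Ltr R n)

/-- The free `ℤ`-algebra `ℤ⟨X ∪ R⟩` on the alphabet `X ∪ R`. -/
abbrev FreeAlg (R : Type) (n : ℕ) := MonoidAlgebra ℤ (W R n)

variable {R : Type} [Ring R] {n : ℕ}

/-- The letter `xᵢ` as a word. -/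
def xLtr (i : Fin n) : W R n := FreeMonoid.of (Sum.inl i)

/-- The letter `r ∈ R` as a word. -/
def rLtr (r : R) : W R n := FreeMonoid.of (Sum.inr r)

/-- A word of `W`, viewed inside `ℤ⟨X ∪ R⟩`. -/
noncomputable def wd (w : W R n) : FreeAlg R n := MonoidAlgebra.of ℤ (W R n) w

/-- The number of inversions of a word involving only `x`'s. -/
def invX : List (Ltr R n) → ℕ
  | [] => 0
  | (Sum.inl j) :: rest =>
      (rest.countP (fun l => match l with | Sum.inl i => decide (i < j) | _ => false)) + invX rest
  | (Sum.inr _) :: rest => invX rest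

/-- The number of inversions of a word of the type `(xᵢ, r)`. -/
def invXR : List (Ltr R n) → ℕ
  | [] => 0
  | (Sum.inl _) :: rest =>
      (rest.countP (fun l => match l with | Sum.inr _ => true | _ => false)) + invXR rest
  | (Sum.inr _) :: rest => invXR rest

/-- `T` is the set of words with complexity `(a, 0, 0)`. -/
def MemT (w : W R n) : Prop := invX (FreeMonoid.toList w) = 0 ∧ invXR (FreeMonoid.toList w) = 0

/-- The list of `X`-letters of a word, in order. -/
def xPart (w : W R n) : List (Fin n) :=
  (FreeMonoid.toList w).filterMap (fun l => match l with | Sum.inl i => some i | _ => none)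

/-- The ordered product of the `R`-letters of a word. -/
def rPart (w : W R n) : R :=
  ((FreeMonoid.toList w).filterMap (fun l => match l with | Sum.inr r => some r | _ => none)).prod

/-- `Mon` is the set of standard monomials `x_{i₁} ⋯ x_{i_m}`, `i₁ ≤ ⋯ ≤ i_m`. -/
def Mon (n : ℕ) := {l : List (Fin n) // l.Pairwise (· ≤ ·)}

/-- `F_R(Mon)`, the free left `R`-module with basis `Mon`. -/
abbrev FRMon (R : Type) [Ring R] (n : ℕ) := Mon n →₀ R

open scoped Classical in
/-- The value of `q` on a word: `q(r₁ ⋯ r_m x_{i₁} ⋯ x_{i_k}) = (r₁ ⋯ r_m) • x_{i₁} ⋯ x_{i_k}`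
(for words in `T`; the value on other words is irrelevant). -/
noncomputable def qWord (w : W R n) : FRMon R n :=
  if h : (xPart w).Pairwise (· ≤ ·) then Finsupp.single ⟨xPart w, h⟩ (rPart w) else 0

/-- `t : F_R(Mon) → ℤ⟨X ∪ R⟩`, sending `Σ r_x̄ • x̄` to `Σ (r_x̄ x̄)` (the word consisting of the
`R`-letter `r_x̄` followed by the monomial `x̄`). -/
noncomputable def tmap (f : FRMon R n) : FreeAlg R n :=
  f.sum (fun m r => wd (FreeMonoid.ofList (Sum.inr r :: m.val.map Sum.inl)))

/-- The defining recursion (by induction on complexity) of the reduction map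
`p : W → ℤ⟨X ∪ R⟩` associated with the data `σᵢ, δᵢ, c_{ij}, d_{ij}, a_{ij}^{(k)}`. -/
structure IsReduction (σ δ : Fin n → R → R) (c d : Fin n → Fin n → R)
    (a : Fin n → Fin n → Fin n → R) (P : W R n → FreeAlg R n) : Prop where
  of_memT : ∀ w : W R n, MemT w → P w = wd w
  xr : ∀ (v₁ v₂ : W R n) (i : Fin n) (r : R), MemT (rLtr r * v₂) →
    P (v₁ * xLtr i * rLtr r * v₂) =
      P (v₁ * rLtr (σ i r) * xLtr i * v₂) + P (v₁ * rLtr (δ i r) * v₂)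
  xx : ∀ (v₁ v₂ : W R n) (i j : Fin n), i < j → MemT (xLtr i * v₂) →
    P (v₁ * xLtr j * xLtr i * v₂) =
      P (v₁ * rLtr (c i j) * xLtr i * xLtr j * v₂) +
      (∑ k, P (v₁ * rLtr (a i j k) * xLtr k * v₂)) + P (v₁ * rLtr (d i j) * v₂)

/-- Condition (1): each `σᵢ` is a ring endomorphism of `R` and each `δᵢ` is a
`σᵢ`-derivation. -/
def Cond1 (σ δ : Fin n → R → R) : Prop :=
  ∀ i : Fin n, σ i 1 = 1 ∧ (∀ r s, σ i (r + s) = σ i r + σ i s) ∧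
    (∀ r s, σ i (r * s) = σ i r * σ i s) ∧
    (∀ r s, δ i (r + s) = δ i r + δ i s) ∧
    (∀ r s, δ i (r * s) = σ i r * δ i s + δ i r * s)

/-!
For the data `σᵢ = id, δᵢ = 0, c_{ij} = 1, d_{ij} = 0`, the composite `q ∘ p` moves scalar letters
to the front and replaces an inversion `x_j xᵢ` by `xᵢ x_j + Σ_m a_{ij}^{(m)} x_m`, so both sides of
each condition can be computed explicitly in `F_K(Mon)`, starting from the value `pairNF a p q` of
`q ∘ p` on `x_p x_q`. For condition (2) both sides equal `r • pairNF a j i`, since `K` is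
commutative. For condition (3) the two sides resolve the inversions of `x_k x_j xᵢ` in different
orders; as `pairNF a p m - pairNF a m p` is the image of `⁅y p, y m⁆` under `y_m ↦ x_m`, the two
results differ by the image of the Jacobiator of `yᵢ, y_j, y_k`, which vanishes.
-/

section Words

omit [Ring R]

def IsScalarWord (v : W R n) : Prop := ∀ l ∈ FreeMonoid.toList v, l.isRight

theorem isScalarWord_one : IsScalarWord (1 : W R n) := by
  simp [IsScalarWord]

theorem isScalarWord_rLtr (r : R) : IsScalarWord (rLtr r : W R n) := by
  simp [IsScalarWord, rLtr]

theorem IsScalarWord.mul {u v : W R n} (hu : IsScalarWord u) (hv : IsScalarWord v) :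
    IsScalarWord (u * v) := by
  intro l hl
  rcases List.mem_append.1 (FreeMonoid.toList_mul u v ▸ hl) with h | h
  exacts [hu l h, hv l h]

theorem invX_append_of_forall_isRight {l₁ l₂ : List (Ltr R n)} (h : ∀ x ∈ l₁, x.isRight) :
    invX (l₁ ++ l₂) = invX l₂ := by
  induction l₁ with
  | nil => rfl
  | cons x l₁ ih =>
    obtain ⟨r, rfl⟩ := Sum.isRight_iff.1 (h x List.mem_cons_self)
    exact ih fun x hx => h x (List.mem_cons_of_mem _ hx)

theorem invXR_append_of_forall_isRight {l₁ l₂ : List (Ltr R n)} (h : ∀ x ∈ l₁, x.isRight) :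
    invXR (l₁ ++ l₂) = invXR l₂ := by
  induction l₁ with
  | nil => rfl
  | cons x l₁ ih =>
    obtain ⟨r, rfl⟩ := Sum.isRight_iff.1 (h x List.mem_cons_self)
    exact ih fun x hx => h x (List.mem_cons_of_mem _ hx)

theorem memT_scalar_mul_iff {v w : W R n} (hv : IsScalarWord v) : MemT (v * w) ↔ MemT w := by
  rw [MemT, MemT, FreeMonoid.toList_mul, invX_append_of_forall_isRight hv,
    invXR_append_of_forall_isRight hv]

theorem MemT.of_xLtr_mul {p : Fin n} {w : W R n} (h : MemT (xLtr p * w)) : MemT w := by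
  obtain ⟨h₁, h₂⟩ := h
  simp only [xLtr, FreeMonoid.toList_mul, FreeMonoid.toList_of, List.singleton_append, invX,
    invXR, Nat.add_eq_zero_iff] at h₁ h₂
  exact ⟨h₁.2, h₂.2⟩

theorem memT_one : MemT (1 : W R n) := ⟨rfl, rfl⟩

theorem memT_rLtr (r : R) : MemT (rLtr r : W R n) := ⟨rfl, rfl⟩

theorem xPart_scalar_mul {v w : W R n} (hv : IsScalarWord v) : xPart (v * w) = xPart w := by
  rw [xPart, FreeMonoid.toList_mul, List.filterMap_append, List.filterMap_eq_nil_iff.2,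
    List.nil_append, xPart]
  intro l hl
  obtain ⟨r, rfl⟩ := Sum.isRight_iff.1 (hv l hl)
  rfl

def Mon.toWord (m : Mon n) : W R n := FreeMonoid.ofList (m.val.map Sum.inl)

theorem invX_map_inl {l : List (Fin n)} (h : l.Pairwise (· ≤ ·)) :
    invX (l.map Sum.inl : List (Ltr R n)) = 0 := by
  induction l with
  | nil => rfl
  | cons i l ih =>
    rw [List.pairwise_cons] at h
    simp only [List.map_cons, invX, ih h.2, add_zero, List.countP_eq_zero, List.mem_map]
    rintro _ ⟨j, hj, rfl⟩
    simpa using h.1 j hj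

theorem invXR_map_inl (l : List (Fin n)) : invXR (l.map Sum.inl : List (Ltr R n)) = 0 := by
  induction l with
  | nil => rfl
  | cons i l ih =>
    simp only [List.map_cons, invXR, ih, add_zero, List.countP_eq_zero, List.mem_map]
    rintro _ ⟨j, -, rfl⟩
    simp

theorem Mon.memT_toWord (m : Mon n) : MemT (m.toWord : W R n) := by
  simp only [MemT, Mon.toWord, FreeMonoid.toList_ofList]
  exact ⟨invX_map_inl m.2, invXR_map_inl _⟩

theorem Mon.xPart_toWord (m : Mon n) : xPart (m.toWord : W R n) = m.val := by
  simp [xPart, Mon.toWord, List.filterMap_map]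

def Mon.var (i : Fin n) : Mon n := ⟨[i], List.pairwise_singleton _ i⟩

def Mon.pair (i j : Fin n) (h : i ≤ j) : Mon n := ⟨[i, j], by simp [h]⟩

def Mon.triple (i j k : Fin n) (hij : i ≤ j) (hjk : j ≤ k) : Mon n :=
  ⟨[i, j, k], by simp [hij, hjk, hij.trans hjk]⟩

theorem memT_xLtr (i : Fin n) : MemT (xLtr i : W R n) := (Mon.var i).memT_toWord

theorem memT_xLtr_mul_xLtr {i j : Fin n} (h : i ≤ j) : MemT (xLtr i * xLtr j : W R n) :=
  (Mon.pair i j h).memT_toWord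

theorem wd_mul (u v : W R n) : wd u * wd v = wd (u * v) :=
  ((MonoidAlgebra.of ℤ (W R n)).map_mul u v).symm

end Words

section WordValues

theorem rPart_mul (v w : W R n) : rPart (v * w) = rPart v * rPart w := by
  rw [rPart, FreeMonoid.toList_mul, List.filterMap_append, List.prod_append, rPart, rPart]

@[simp]
theorem rPart_one : rPart (1 : W R n) = 1 := rfl

@[simp]
theorem rPart_rLtr (r : R) : rPart (rLtr r : W R n) = r := by
  simp [rPart, rLtr]

theorem qWord_scalar_mul {v w : W R n} (hv : IsScalarWord v) :
    qWord (v * w) = rPart v • qWord w := by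
  unfold qWord
  simp only [xPart_scalar_mul hv, rPart_mul]
  split_ifs
  exacts [(Finsupp.smul_single (rPart v) _ _).symm, (smul_zero _).symm]

theorem Mon.qWord_toWord (m : Mon n) : qWord (m.toWord : W R n) = Finsupp.single m 1 := by
  have hr : rPart (m.toWord : W R n) = 1 := by
    simp [rPart, Mon.toWord, List.filterMap_map]
  rw [qWord, dif_pos ((Mon.xPart_toWord m).symm ▸ m.2), hr]
  congr
  exact Mon.xPart_toWord m

end WordValues

section Reduction

/-- The value of `q ∘ p` on the word `x_p x_q`. -/
noncomputable def pairNF (a : Fin n → Fin n → Fin n → R) (p q : Fin n) : FRMon R n :=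
  if h : p ≤ q then Finsupp.single (Mon.pair p q h) 1
  else Finsupp.single (Mon.pair q p (le_of_not_ge h)) 1 +
    ∑ m, a q p m • Finsupp.single (Mon.var m) 1

theorem pairNF_of_le (a : Fin n → Fin n → Fin n → R) {p q : Fin n} (h : p ≤ q) :
    pairNF a p q = Finsupp.single (Mon.pair p q h) 1 :=
  dif_pos h

theorem pairNF_of_lt (a : Fin n → Fin n → Fin n → R) {p q : Fin n} (h : q < p) :
    pairNF a p q = Finsupp.single (Mon.pair q p h.le) 1 +
      ∑ m, a q p m • Finsupp.single (Mon.var m) 1 :=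
  dif_neg (not_le.2 h)

/-- The reduction data of the universal enveloping algebra, with relations
`x_j xᵢ = xᵢ x_j + Σ_k a_{ij}^{(k)} x_k`. -/
abbrev IsEnvelopingReduction (a : Fin n → Fin n → Fin n → R) (P : W R n → FreeAlg R n) :
    Prop :=
  IsReduction (fun _ r => r) (fun _ _ => 0) (fun _ _ => 1) (fun _ _ => 0) a P

variable {a : Fin n → Fin n → Fin n → R} {P : W R n → FreeAlg R n}
  {Q : FreeAlg R n →ₗ[ℤ] FRMon R n} (hP : IsEnvelopingReduction a P)
include hP

/- Since `δ = 0`, the rewriting rules leave behind words containing the scalar letter `0`; these are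
killed by `q ∘ p` only once they have been reduced themselves, hence the hypotheses `hz`. -/
theorem qp_xLtr_rLtr {v w : W R n} {i : Fin n} {r : R} (hw : MemT w)
    (hz : Q (P (v * (rLtr 0 * w))) = 0) :
    Q (P (v * (xLtr i * (rLtr r * w)))) = Q (P (v * (rLtr r * (xLtr i * w)))) := by
  have h := hP.xr v w i r ((memT_scalar_mul_iff (isScalarWord_rLtr r)).2 hw)
  simp only [mul_assoc] at h
  rw [h, map_add, hz, add_zero]

theorem qp_xLtr_xLtr_of_lt {v w : W R n} {i j : Fin n} (hij : i < j) (hw : MemT (xLtr i * w))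
    (hz : Q (P (v * (rLtr 0 * w))) = 0) :
    Q (P (v * (xLtr j * (xLtr i * w)))) =
      Q (P (v * (rLtr 1 * (xLtr i * (xLtr j * w))))) +
        ∑ m, Q (P (v * (rLtr (a i j m) * (xLtr m * w)))) := by
  have h := hP.xx v w i j hij hw
  simp only [mul_assoc] at h
  rw [h, map_add, map_add, map_sum, hz, add_zero]

variable (hQ : ∀ w, Q (wd w) = qWord w)
include hQ

theorem qp_scalar_mul_of_memT {v w : W R n} (hv : IsScalarWord v) (hw : MemT w) :
    Q (P (v * w)) = rPart v • qWord w := by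
  rw [hP.of_memT _ ((memT_scalar_mul_iff hv).2 hw), hQ, qWord_scalar_mul hv]

theorem qp_scalar_mul_rLtr_zero {v w : W R n} (hv : IsScalarWord v) (hw : MemT w) :
    Q (P (v * (rLtr 0 * w))) = 0 := by
  rw [← mul_assoc, qp_scalar_mul_of_memT hP hQ (hv.mul (isScalarWord_rLtr 0)) hw, rPart_mul,
    rPart_rLtr, mul_zero, zero_smul]

theorem qp_scalar_mul_xLtr_rLtr_zero {v w : W R n} {p : Fin n} (hv : IsScalarWord v)
    (hw : MemT (xLtr p * w)) : Q (P (v * (xLtr p * (rLtr 0 * w)))) = 0 := by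
  rw [qp_xLtr_rLtr hP hw.of_xLtr_mul (qp_scalar_mul_rLtr_zero hP hQ hv hw.of_xLtr_mul)]
  exact qp_scalar_mul_rLtr_zero hP hQ hv hw

theorem qp_scalar_mul_xLtr_rLtr_mul {v w : W R n} {i : Fin n} {r : R} (hv : IsScalarWord v)
    (hw : MemT w) : Q (P (v * (xLtr i * (rLtr r * w)))) = Q (P (v * rLtr r * (xLtr i * w))) := by
  rw [qp_xLtr_rLtr hP hw (qp_scalar_mul_rLtr_zero hP hQ hv hw), mul_assoc]

theorem qp_scalar_mul_toWord {v : W R n} (hv : IsScalarWord v) (m : Mon n) :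
    Q (P (v * m.toWord)) = rPart v • Finsupp.single m 1 := by
  rw [qp_scalar_mul_of_memT hP hQ hv m.memT_toWord, m.qWord_toWord]

theorem qp_scalar_mul_rLtr_xLtr {v : W R n} (hv : IsScalarWord v) (r : R) (m : Fin n) :
    Q (P (v * (rLtr r * xLtr m))) = (rPart v * r) • Finsupp.single (Mon.var m) 1 := by
  rw [← mul_assoc]
  exact (qp_scalar_mul_toWord hP hQ (hv.mul (isScalarWord_rLtr r)) (Mon.var m)).trans
    (by rw [rPart_mul, rPart_rLtr])

theorem qp_scalar_mul_xLtr_xLtr {v : W R n} (hv : IsScalarWord v) (p q : Fin n) :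
    Q (P (v * (xLtr p * xLtr q))) = rPart v • pairNF a p q := by
  rcases le_or_gt p q with h | h
  · rw [pairNF_of_le a h]
    exact qp_scalar_mul_toWord hP hQ hv (Mon.pair p q h)
  · have hswap := qp_xLtr_xLtr_of_lt hP (v := v) (w := 1) h (memT_xLtr q)
      (qp_scalar_mul_rLtr_zero hP hQ hv memT_one)
    simp only [mul_one] at hswap
    have hsorted : Q (P (v * (rLtr 1 * (xLtr q * xLtr p)))) =
        rPart v • Finsupp.single (Mon.pair q p h.le) 1 := by
      rw [← mul_assoc]
      exact (qp_scalar_mul_toWord hP hQ (hv.mul (isScalarWord_rLtr 1)) (Mon.pair q p h.le)).trans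
        (by rw [rPart_mul, rPart_rLtr, mul_one])
    simp only [hswap, hsorted, qp_scalar_mul_rLtr_xLtr hP hQ hv, pairNF_of_lt a h, smul_add,
      Finset.smul_sum, smul_smul]

theorem qp_scalar_mul_xLtr_rLtr {v : W R n} (hv : IsScalarWord v) (p : Fin n) (r : R) :
    Q (P (v * (xLtr p * rLtr r))) = (rPart v * r) • Finsupp.single (Mon.var p) 1 := by
  have h := qp_scalar_mul_xLtr_rLtr_mul hP hQ hv (i := p) (r := r) memT_one
  rw [mul_one, mul_one] at h
  rw [h, mul_assoc, qp_scalar_mul_rLtr_xLtr hP hQ hv]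

theorem qp_scalar_mul_xLtr_xLtr_rLtr {v : W R n} (hv : IsScalarWord v) (p q : Fin n) (r : R) :
    Q (P (v * (xLtr p * (xLtr q * rLtr r)))) = (rPart v * r) • pairNF a p q := by
  have hz : Q (P (v * xLtr p * (rLtr 0 * 1))) = 0 := by
    rw [mul_assoc]
    exact qp_scalar_mul_xLtr_rLtr_zero hP hQ hv (memT_xLtr p)
  have h := qp_xLtr_rLtr hP (w := 1) (i := q) (r := r) memT_one hz
  simp only [mul_one, mul_assoc] at h
  rw [h, qp_scalar_mul_xLtr_rLtr_mul hP hQ hv (memT_xLtr q),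
    qp_scalar_mul_xLtr_xLtr hP hQ (hv.mul (isScalarWord_rLtr r)), rPart_mul, rPart_rLtr]

theorem qp_scalar_mul_xLtr_xLtr_xLtr_of_lt_right {v : W R n} (hv : IsScalarWord v) (p : Fin n)
    {q s : Fin n} (hqs : q < s) :
    Q (P (v * (xLtr p * (xLtr s * xLtr q)))) =
      Q (P (v * rLtr 1 * (xLtr p * (xLtr q * xLtr s)))) +
        rPart v • ∑ m, a q s m • pairNF a p m := by
  have hz : Q (P (v * xLtr p * (rLtr 0 * 1))) = 0 := by
    rw [mul_assoc]
    exact qp_scalar_mul_xLtr_rLtr_zero hP hQ hv (memT_xLtr p)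
  have h := qp_xLtr_xLtr_of_lt hP (w := 1) hqs (memT_xLtr q) hz
  simp only [mul_one, mul_assoc] at h
  rw [h, qp_scalar_mul_xLtr_rLtr_mul hP hQ hv (memT_xLtr_mul_xLtr hqs.le), Finset.smul_sum]
  congr 1
  refine Finset.sum_congr rfl fun m _ => ?_
  rw [qp_scalar_mul_xLtr_rLtr_mul hP hQ hv (memT_xLtr m),
    qp_scalar_mul_xLtr_xLtr hP hQ (hv.mul (isScalarWord_rLtr _)), rPart_mul, rPart_rLtr, mul_smul]

theorem qp_scalar_mul_xLtr_xLtr_xLtr_of_lt_left {v : W R n} (hv : IsScalarWord v)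
    {p q s : Fin n} (hps : p < s) (hpq : p ≤ q) :
    Q (P (v * (xLtr s * (xLtr p * xLtr q)))) =
      Q (P (v * rLtr 1 * (xLtr p * (xLtr s * xLtr q)))) +
        rPart v • ∑ m, a p s m • pairNF a m q := by
  rw [qp_xLtr_xLtr_of_lt hP hps (memT_xLtr_mul_xLtr hpq)
    (qp_scalar_mul_rLtr_zero hP hQ hv (memT_xLtr q)), mul_assoc, Finset.smul_sum]
  congr 1
  refine Finset.sum_congr rfl fun m _ => ?_
  rw [← mul_assoc, qp_scalar_mul_xLtr_xLtr hP hQ (hv.mul (isScalarWord_rLtr _)), rPart_mul,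
    rPart_rLtr, mul_smul]

theorem q_pbar_p_xLtr_mul_xLtr_mul_wd {Pbar : FreeAlg R n →ₗ[ℤ] FreeAlg R n}
    (hPbar : ∀ w, Pbar (wd w) = P w) {i j : Fin n} (hij : i < j) {u : W R n} (hu : MemT u) :
    Q (Pbar (P (xLtr j * xLtr i) * wd u)) =
      Q (P (rLtr 1 * (xLtr i * (xLtr j * u)))) + ∑ m, Q (P (rLtr (a i j m) * (xLtr m * u))) := by
  have hscalar {r : R} {w : W R n} (hw : MemT w) : P (rLtr r * w) = wd (rLtr r * w) :=
    hP.of_memT _ ((memT_scalar_mul_iff (isScalarWord_rLtr r)).2 hw)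
  have hxx := hP.xx 1 1 i j hij (memT_xLtr i)
  simp only [one_mul, mul_one, mul_assoc] at hxx
  simp only [hxx, hscalar (memT_xLtr_mul_xLtr hij.le), hscalar (memT_xLtr _),
    hP.of_memT _ (memT_rLtr 0), add_mul, Finset.sum_mul, wd_mul, map_add, map_sum, hPbar]
  rw [qp_scalar_mul_of_memT hP hQ (isScalarWord_rLtr 0) hu, rPart_rLtr, zero_smul, add_zero]
  simp only [mul_assoc]

end Reduction

section LieAlgebra

variable {K : Type} [CommRing K] {L : Type} [LieRing L] [LieAlgebra K L]
  (y : Module.Basis (Fin n) K L)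

noncomputable def toFRMon : L →ₗ[K] FRMon K n :=
  Finsupp.lmapDomain K K Mon.var ∘ₗ y.repr.toLinearMap

theorem toFRMon_apply_basis (m : Fin n) : toFRMon y (y m) = Finsupp.single (Mon.var m) 1 := by
  simp [toFRMon]

variable {a : Fin n → Fin n → Fin n → K}
  (ha : ∀ i j : Fin n, i < j → ⁅y j, y i⁆ = ∑ k, a i j k • y k)
include ha

theorem sum_smul_single_var_eq_toFRMon {p q : Fin n} (h : p < q) :
    ∑ m, a p q m • Finsupp.single (Mon.var m) 1 = toFRMon y ⁅y q, y p⁆ := by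
  simp [ha p q h, toFRMon_apply_basis]

theorem pairNF_eq_pairNF_swap_add (p q : Fin n) :
    pairNF a p q = pairNF a q p + toFRMon y ⁅y p, y q⁆ := by
  rcases lt_trichotomy p q with h | rfl | h
  · rw [pairNF_of_le a h.le, pairNF_of_lt a h, sum_smul_single_var_eq_toFRMon y ha h,
      ← lie_skew, map_neg]
    abel
  · simp
  · rw [pairNF_of_lt a h, pairNF_of_le a h.le, sum_smul_single_var_eq_toFRMon y ha h]

theorem sum_smul_pairNF_eq (p : Fin n) (c : Fin n → K) :
    ∑ m, c m • pairNF a p m = ∑ m, c m • pairNF a m p + toFRMon y ⁅y p, ∑ m, c m • y m⁆ := by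
  simp only [pairNF_eq_pairNF_swap_add y ha p, smul_add, Finset.sum_add_distrib, lie_sum,
    lie_smul, map_sum, map_smul]

theorem jacobi_pairNF {i j k : Fin n} (hij : i < j) (hjk : j < k) :
    ∑ m, a j k m • pairNF a i m + ∑ m, a i k m • pairNF a m j + ∑ m, a i j m • pairNF a k m =
      ∑ m, a j k m • pairNF a m i + ∑ m, a i k m • pairNF a j m + ∑ m, a i j m • pairNF a m k := by
  have jacobi : ⁅y i, ⁅y k, y j⁆⁆ + ⁅y k, ⁅y j, y i⁆⁆ = ⁅y j, ⁅y k, y i⁆⁆ := by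
    rw [← sub_eq_zero, ← lie_jacobi (y i) (y k) (y j), ← lie_skew (y i) (y k), lie_neg]
    abel
  rw [sum_smul_pairNF_eq y ha i, sum_smul_pairNF_eq y ha k, sum_smul_pairNF_eq y ha j,
    ← ha j k hjk, ← ha i j hij, ← ha i k (hij.trans hjk), ← jacobi, map_add]
  abel

end LieAlgebra

section Conditions

variable {K : Type} [CommRing K] {a : Fin n → Fin n → Fin n → K} {P : W K n → FreeAlg K n}
  {Pbar : FreeAlg K n →ₗ[ℤ] FreeAlg K n} {Q : FreeAlg K n →ₗ[ℤ] FRMon K n}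
  (hP : IsEnvelopingReduction a P) (hPbar : ∀ w, Pbar (wd w) = P w)
  (hQ : ∀ w, Q (wd w) = qWord w)
include hP hPbar hQ

theorem qp_xLtr_mul_xLtr_mul_rLtr {i j : Fin n} (hij : i < j) (r : K) :
    Q (P (xLtr j * xLtr i * rLtr r)) = Q (Pbar (P (xLtr j * xLtr i) * wd (rLtr r))) := by
  have hlhs : Q (P (xLtr j * xLtr i * rLtr r)) = r • pairNF a j i := by
    simpa [mul_assoc] using qp_scalar_mul_xLtr_xLtr_rLtr hP hQ isScalarWord_one j i r
  rw [hlhs, q_pbar_p_xLtr_mul_xLtr_mul_wd hP hQ hPbar hij (memT_rLtr r),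
    qp_scalar_mul_xLtr_xLtr_rLtr hP hQ (isScalarWord_rLtr 1)]
  simp only [qp_scalar_mul_xLtr_rLtr hP hQ (isScalarWord_rLtr _), rPart_rLtr, one_mul,
    pairNF_of_lt a hij, pairNF_of_le a hij.le, smul_add, Finset.smul_sum, smul_smul, mul_comm r]

theorem qp_xLtr_mul_xLtr_mul_xLtr {L : Type} [LieRing L] [LieAlgebra K L]
    (y : Module.Basis (Fin n) K L) (ha : ∀ i j : Fin n, i < j → ⁅y j, y i⁆ = ∑ k, a i j k • y k)
    {i j k : Fin n} (hij : i < j) (hjk : j < k) :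
    Q (P (xLtr k * xLtr j * xLtr i)) = Q (Pbar (P (xLtr k * xLtr j) * wd (xLtr i))) := by
  have hik := hij.trans hjk
  have h₁ : IsScalarWord (rLtr 1 : W K n) := isScalarWord_rLtr 1
  have hsorted {v : W K n} (hv : IsScalarWord v) :
      Q (P (v * (xLtr i * (xLtr j * xLtr k)))) =
        rPart v • Finsupp.single (Mon.triple i j k hij.le hjk.le) 1 :=
    qp_scalar_mul_toWord hP hQ hv (Mon.triple i j k hij.le hjk.le)
  have hlhs : Q (P (xLtr k * xLtr j * xLtr i)) =
      Finsupp.single (Mon.triple i j k hij.le hjk.le) 1 +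
        (∑ m, a j k m • pairNF a i m + ∑ m, a i k m • pairNF a m j +
          ∑ m, a i j m • pairNF a k m) := by
    change Q (P (1 * (xLtr k * (xLtr j * xLtr i)))) = _
    rw [qp_scalar_mul_xLtr_xLtr_xLtr_of_lt_right hP hQ isScalarWord_one k hij, one_mul,
      qp_scalar_mul_xLtr_xLtr_xLtr_of_lt_left hP hQ h₁ hik hij.le,
      qp_scalar_mul_xLtr_xLtr_xLtr_of_lt_right hP hQ (h₁.mul h₁) i hjk,
      hsorted ((h₁.mul h₁).mul h₁)]
    simp only [rPart_mul, rPart_one, rPart_rLtr, mul_one, one_smul]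
    abel
  have hrhs : Q (Pbar (P (xLtr k * xLtr j) * wd (xLtr i))) =
      Finsupp.single (Mon.triple i j k hij.le hjk.le) 1 +
        (∑ m, a j k m • pairNF a m i + ∑ m, a i k m • pairNF a j m +
          ∑ m, a i j m • pairNF a m k) := by
    rw [q_pbar_p_xLtr_mul_xLtr_mul_wd hP hQ hPbar hjk (memT_xLtr i),
      qp_scalar_mul_xLtr_xLtr_xLtr_of_lt_right hP hQ h₁ j hik,
      qp_scalar_mul_xLtr_xLtr_xLtr_of_lt_left hP hQ (h₁.mul h₁) hij hik.le,
      hsorted ((h₁.mul h₁).mul h₁)]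
    simp only [qp_scalar_mul_xLtr_xLtr hP hQ (isScalarWord_rLtr _), rPart_mul, rPart_rLtr,
      mul_one, one_smul]
    abel
  rw [hlhs, hrhs, jacobi_pairNF y ha hij hjk]

end Conditions

/-- For a finite-dimensional Lie algebra `𝒢` over a field `K` with basis `y₁,…,yₙ` and structure
constants `a_{ij}^{(k)}` (for `i < j`), the reduction data `σᵢ := id`, `δᵢ := 0`, `c_{ij} := 1`,
`d_{ij} := 0`, `a_{ij}^{(k)}` satisfies conditions (2) and (3) of the existence theorem
(the latter by the Jacobi identity). -/
theorem lieAlgebra_reduction_conditions (K : Type) [Field K]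
    (L : Type) [LieRing L] [LieAlgebra K L] {n : ℕ} (y : Module.Basis (Fin n) K L)
    (a : Fin n → Fin n → Fin n → K)
    (ha : ∀ i j : Fin n, i < j → ⁅y j, y i⁆ = ∑ k, a i j k • y k)
    (P : W K n → FreeAlg K n) (Pbar : FreeAlg K n →ₗ[ℤ] FreeAlg K n)
    (Q : FreeAlg K n →ₗ[ℤ] FRMon K n)
    (hP : IsReduction (fun _ r => r) (fun _ _ => 0) (fun _ _ => 1) (fun _ _ => 0) a P)
    (hPbar : ∀ w, Pbar (wd w) = P w)
    (hQ : ∀ w, Q (wd w) = qWord w) :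
    (∀ i j : Fin n, i < j → ∀ r : K,
      Q (P (xLtr j * xLtr i * rLtr r)) = Q (Pbar (P (xLtr j * xLtr i) * wd (rLtr r)))) ∧
    (∀ i j k : Fin n, i < j → j < k →
      Q (P (xLtr k * xLtr j * xLtr i)) = Q (Pbar (P (xLtr k * xLtr j) * wd (xLtr i)))) :=
  ⟨fun _ _ hij r => qp_xLtr_mul_xLtr_mul_rLtr hP hPbar hQ hij r,
    fun _ _ _ hij hjk => qp_xLtr_mul_xLtr_mul_xLtr hP hPbar hQ y ha hij hjk⟩
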